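/- Let e ≥ 2 and let (Δ_1, …, Δ_r) be mod-e segments forming a banal multiset. Then there exist Z-segments (Δ̃_1, …, Δ̃_r) such that for each i the length of Δ̃_i equals the length of Δ_i and the reduction modulo e of the left endpoint of Δ̃_i equals the first class of Δ_i, and such that for all indices i, j: Δ̃_i precedes Δ̃_j (as Z-segments) if and only if Δ_i precedes Δ_j (as mod-e segments). (This is the lifting of a banal multisegment with matching precedences asserted in Remark 6.10 of the paper; banality guarantees that such a choice is possible.) -/

import Mathlib

/-!
Choose a class `c` outside every support and lift each class `x` to its representative in the
window `(c̃, c̃ + e]` of integers, where `c̃` lifts `c`. Away from `c` this lift turns `x ↦ x + 1`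
into `n ↦ n + 1`, so it maps the list of each segment onto an interval of integers and runs avoiding
`c` onto runs of integers. A run of length larger than both segments inside the concatenation of two
integer intervals forces the integer precedence inequalities; conversely those inequalities exhibit
such a run, which reduces modulo `e`.
-/

/-- The list `(a, a+1, …, a+l−1)` of classes of the mod-`e` segment `(a, l)`. -/
def mlist (e : ℕ) (a : ZMod e) (l : ℕ) : List (ZMod e) :=
  (List.range l).map fun k => a + (k : ZMod e)

/-- A mod-`e` segment `Δ` precedes `Δ'` if some sublist of the concatenation of
the list of `Δ` followed by the list of `Δ'` is a run of length strictly
greater than the lengths of both segments. -/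
def mprec (e : ℕ) (Δ Δ' : ZMod e × ℕ) : Prop :=
  ∃ s : List (ZMod e), s.Sublist (mlist e Δ.1 Δ.2 ++ mlist e Δ'.1 Δ'.2) ∧
    s.Chain' (fun x y => y = x + 1) ∧ Δ.2 < s.length ∧ Δ'.2 < s.length

/-- A Z-segment `(a, b)` precedes `(a', b')` if `a < a'`, `a' ≤ b + 1` and
`b < b'`. -/
def zprec (Δ Δ' : ℤ × ℤ) : Prop := Δ.1 < Δ'.1 ∧ Δ'.1 ≤ Δ.2 + 1 ∧ Δ.2 < Δ'.2

open List

theorem ZMod.intCast_cast_add_one {n : ℕ} {y : ZMod n} (hy : y + 1 ≠ 0) :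
    (ZMod.cast (y + 1) : ℤ) = ZMod.cast y + 1 := by
  rcases n with _ | m
  · simp
  · rw [ZMod.cast_eq_val, ZMod.cast_eq_val]
    have := Fin.val_add_one (n := m) y
    split_ifs at this with hlast
    · exact absurd (hlast ▸ Fin.last_add_one m) hy
    · exact_mod_cast this

abbrev IsRun {α : Type*} [Add α] [One α] (s : List α) : Prop :=
  s.IsChain fun x y => y = x + 1

def zlist (p : ℤ) (l : ℕ) : List ℤ := (range l).map fun k : ℕ => p + k

section Lists

variable {e : ℕ}

-- The cast in `mlist` elaborates as a coercion of the whole list `range l` to `List (ZMod e)`.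
theorem mlist_eq_map_range (a : ZMod e) (l : ℕ) :
    mlist e a l = (range l).map fun k : ℕ => a + k := by
  simp only [mlist, bind_pure_comp, map_eq_map, map_map]
  rfl

theorem length_mlist (a : ZMod e) (l : ℕ) : (mlist e a l).length = l := by
  simp [mlist_eq_map_range]

theorem mlist_add (a : ZMod e) (m k : ℕ) :
    mlist e a (m + k) = mlist e a m ++ mlist e (a + m) k := by
  simp only [mlist_eq_map_range, range_add, map_append, map_map]
  congr 2
  funext j
  simp only [Function.comp_apply]
  push_cast
  ring

theorem isRun_mlist (a : ZMod e) (l : ℕ) : IsRun (mlist e a l) := by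
  rw [IsRun, mlist_eq_map_range, isChain_map, isChain_range]
  intro m _
  push_cast
  ring

theorem zlist_add (p : ℤ) (m k : ℕ) : zlist p (m + k) = zlist p m ++ zlist (p + m) k := by
  simp only [zlist, range_add, map_append, map_map]
  congr 2
  funext j
  simp only [Function.comp_apply]
  push_cast
  ring

theorem zlist_succ (p : ℤ) (n : ℕ) : zlist p (n + 1) = p :: zlist (p + 1) n := by
  rw [add_comm, zlist_add]
  simp [zlist]

theorem mem_zlist {x p : ℤ} {l : ℕ} : x ∈ zlist p l ↔ p ≤ x ∧ x < p + l := by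
  simp only [zlist, mem_map, mem_range]
  constructor
  · rintro ⟨k, hk, rfl⟩
    omega
  · rintro ⟨h₁, h₂⟩
    exact ⟨(x - p).toNat, by omega, by omega⟩

theorem le_and_add_le_of_zlist_sublist {p q : ℤ} {l n : ℕ} (h : zlist q n <+ zlist p l)
    (hn : 0 < n) : p ≤ q ∧ q + n ≤ p + l := by
  have hfirst : q ∈ zlist p l := h.subset (mem_zlist.2 ⟨le_rfl, by omega⟩)
  have hlast : q + (n - 1 : ℕ) ∈ zlist p l := h.subset (mem_zlist.2 ⟨by omega, by omega⟩)
  rw [mem_zlist] at hfirst hlast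
  omega

theorem IsRun.eq_zlist {t : List ℤ} (ht : IsRun t) : t = zlist (t.headD 0) t.length := by
  induction ht with
  | nil => rfl
  | singleton a => simp [zlist]
  | @cons_cons a b l hab _ ih =>
    simp only [headD_cons, length_cons] at ih ⊢
    rw [zlist_succ, ← hab, ← ih]

end Lists

theorem zprec_of_isRun_sublist {t : List ℤ} {p p' : ℤ} {l l' : ℕ} (ht : IsRun t)
    (hsub : t <+ zlist p l ++ zlist p' l') (hl : l < t.length) (hl' : l' < t.length) :
    zprec (p, p + l - 1) (p', p' + l' - 1) := by
  obtain ⟨t₁, t₂, rfl, h₁, h₂⟩ := sublist_append_iff.1 hsub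
  have hlen₁ : t₁.length ≤ l := by simpa [zlist] using h₁.length_le
  have hlen₂ : t₂.length ≤ l' := by simpa [zlist] using h₂.length_le
  have hrun := ht.eq_zlist
  rw [length_append, zlist_add] at hrun
  obtain ⟨ht₁, ht₂⟩ := append_inj hrun (by simp [zlist])
  rw [ht₁] at h₁
  rw [ht₂] at h₂
  rw [length_append] at hl hl'
  have hb₁ := le_and_add_le_of_zlist_sublist h₁ (by omega)
  have hb₂ := le_and_add_le_of_zlist_sublist h₂ (by omega)
  simp only [zprec]
  omega

theorem mprec_of_zprec {e : ℕ} {p p' : ℤ} {l l' : ℕ}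
    (h : zprec (p, p + l - 1) (p', p' + l' - 1)) :
    mprec e ((p : ZMod e), l) ((p' : ZMod e), l') := by
  obtain ⟨h₁, h₂, h₃⟩ := h
  simp only at h₁ h₂ h₃
  obtain ⟨d, hd⟩ : ∃ d : ℕ, (d : ℤ) = p + l - p' := ⟨(p + l - p').toNat, by omega⟩
  obtain ⟨m, hm⟩ : ∃ m : ℕ, (m : ℤ) = p' + l' - p - l := ⟨(p' + l' - p - l).toNat, by omega⟩
  have hend : (p : ZMod e) + l = p' + d := by
    have hsum : p + l = p' + d := by omega
    exact_mod_cast congrArg (Int.cast : ℤ → ZMod e) hsum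
  -- the witness is the integer run `p, …, p' + l' - 1` read modulo `e`; `d` is the overlap
  refine ⟨mlist e p (l + m), ?_, isRun_mlist _ _, ?_, ?_⟩
  · rw [mlist_add, hend, show l' = d + m by omega, mlist_add]
    exact (Sublist.refl _).append (sublist_append_right _ _)
  all_goals simp only [length_mlist]; omega

section WindowLift

variable {e : ℕ} {c : ZMod e}

/-- The representative of `x` in the window `(c̃, c̃ + e]`, where `c̃ = cast c` (for `e = 0`, `x`
itself): it grows by one along `x ↦ x + 1` except when `x = c`. -/
def windowLift (c x : ZMod e) : ℤ := ZMod.cast c + 1 + ZMod.cast (x - c - 1)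

@[simp]
theorem intCast_windowLift (c x : ZMod e) : ((windowLift c x : ℤ) : ZMod e) = x := by
  simp [windowLift]

theorem windowLift_add_one {x : ZMod e} (hx : x ≠ c) :
    windowLift c (x + 1) = windowLift c x + 1 := by
  have hy : x - c - 1 + 1 ≠ 0 := by simpa [sub_eq_zero] using hx
  rw [windowLift, windowLift, show x + 1 - c - 1 = x - c - 1 + 1 by ring,
    ZMod.intCast_cast_add_one hy]
  ring

theorem windowLift_add_natCast {a : ZMod e} {k : ℕ} (h : ∀ j < k, a + j ≠ c) :
    windowLift c (a + k) = windowLift c a + k := by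
  induction k with
  | zero => simp
  | succ k ih =>
    rw [Nat.cast_succ, ← add_assoc, windowLift_add_one (h k k.lt_succ_self),
      ih fun j hj => h j (hj.trans k.lt_succ_self)]
    push_cast
    ring

theorem map_windowLift_mlist {a : ZMod e} {l : ℕ} (hc : c ∉ mlist e a l) :
    (mlist e a l).map (windowLift c) = zlist (windowLift c a) l := by
  rw [mlist_eq_map_range, zlist, map_map]
  refine map_congr_left fun k hk => windowLift_add_natCast fun j hj hjc => hc ?_
  rw [mlist_eq_map_range, mem_map]
  exact ⟨j, mem_range.2 (hj.trans (mem_range.1 hk)), hjc⟩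

theorem IsRun.map_windowLift {s : List (ZMod e)} (hs : IsRun s) (hc : c ∉ s) :
    IsRun (s.map (windowLift c)) := by
  rw [IsRun, isChain_map]
  refine hs.imp_of_mem_imp fun x y hx _ hxy => ?_
  rw [hxy, windowLift_add_one (ne_of_mem_of_not_mem hx hc)]

theorem zprec_windowLift_of_mprec {a a' : ZMod e} {l l' : ℕ} (hc : c ∉ mlist e a l)
    (hc' : c ∉ mlist e a' l') (h : mprec e (a, l) (a', l')) :
    zprec (windowLift c a, windowLift c a + l - 1)
      (windowLift c a', windowLift c a' + l' - 1) := by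
  obtain ⟨s, hsub, hrun, hl, hl'⟩ := h
  have hcs : c ∉ s := fun hcs => (mem_append.1 (hsub.subset hcs)).elim hc hc'
  refine zprec_of_isRun_sublist (IsRun.map_windowLift hrun hcs) ?_ (by simpa using hl)
    (by simpa using hl')
  rw [← map_windowLift_mlist hc, ← map_windowLift_mlist hc', ← map_append]
  exact hsub.map _

theorem zprec_windowLift_iff {a a' : ZMod e} {l l' : ℕ} (hc : c ∉ mlist e a l)
    (hc' : c ∉ mlist e a' l') :
    zprec (windowLift c a, windowLift c a + l - 1) (windowLift c a', windowLift c a' + l' - 1) ↔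
      mprec e (a, l) (a', l') :=
  ⟨fun h => by simpa using mprec_of_zprec (e := e) h, zprec_windowLift_of_mprec hc hc'⟩

end WindowLift

theorem exists_lift_of_banal_general (e : ℕ) (Δs : List (ZMod e × ℕ))
    (hpos : ∀ Δ ∈ Δs, 1 ≤ Δ.2)
    (hban : ∃ c : ZMod e, ∀ Δ ∈ Δs, c ∉ mlist e Δ.1 Δ.2) :
    ∃ T : Fin Δs.length → ℤ × ℤ,
      (∀ i, (T i).1 ≤ (T i).2) ∧
      (∀ i, (T i).2 - (T i).1 + 1 = ((Δs.get i).2 : ℤ)) ∧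
      (∀ i, (((T i).1 : ℤ) : ZMod e) = (Δs.get i).1) ∧
      (∀ i j, zprec (T i) (T j) ↔ mprec e (Δs.get i) (Δs.get j)) := by
  obtain ⟨c, hc⟩ := hban
  have hmem (i : Fin Δs.length) : Δs.get i ∈ Δs := get_mem Δs i
  refine ⟨fun i => (windowLift c (Δs.get i).1, windowLift c (Δs.get i).1 + (Δs.get i).2 - 1),
    fun i => ?_, fun i => by ring, fun i => intCast_windowLift _ _,
    fun i j => zprec_windowLift_iff (hc _ (hmem i)) (hc _ (hmem j))⟩
  have := hpos _ (hmem i)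
  dsimp only
  omega

/-- Every banal family `(Δ_1, …, Δ_r)` of mod-`e` segments
(`e ≥ 2`) lifts to a family `(Δ̃_1, …, Δ̃_r)` of Z-segments of the same lengths
and with matching first classes, such that `Δ̃_i` precedes `Δ̃_j` if and only
if `Δ_i` precedes `Δ_j`, for all `i, j` (Remark 6.10 of the paper). -/
theorem exists_lift_of_banal (e : ℕ) (he : 2 ≤ e) (Δs : List (ZMod e × ℕ))
    (hpos : ∀ Δ ∈ Δs, 1 ≤ Δ.2)
    (hban : ∃ c : ZMod e, ∀ Δ ∈ Δs, c ∉ mlist e Δ.1 Δ.2) :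
    ∃ T : Fin Δs.length → ℤ × ℤ,
      (∀ i, (T i).1 ≤ (T i).2) ∧
      (∀ i, (T i).2 - (T i).1 + 1 = ((Δs.get i).2 : ℤ)) ∧
      (∀ i, (((T i).1 : ℤ) : ZMod e) = (Δs.get i).1) ∧
      (∀ i j, zprec (T i) (T j) ↔ mprec e (Δs.get i) (Δs.get j)) :=
  exists_lift_of_banal_general e Δs hpos hban
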